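/- arXiv:2406.04916 — 2 statements merged into one kernel-verified Lean document; each statement's English description precedes it below -/
import Mathlib

section
/- Tweedie's formula: if z is a Gaussian random vector with z | μ ~ N(μ, Σ) (Σ fixed, known) and μ has prior density g, then the posterior mean satisfies E[μ | z] = z + Σ ∇_z log p(z), where p(z) = ∫ N(z; μ, Σ) g(μ) dμ is the marginal density. -/
open MeasureTheory Real
open scoped RealInnerProductSpace
set_option synthInstance.maxHeartbeats 1000000
set_option maxHeartbeats 1000000

/-- The multivariate Gaussian density `N(z; m, S)` on `ℝ^d`. -/
noncomputable def gaussDensity (d : ℕ) (S : Matrix (Fin d) (Fin d) ℝ)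
    (m z : EuclideanSpace ℝ (Fin d)) : ℝ :=
  ((2 * Real.pi) ^ d * S.det) ^ (-(1 : ℝ) / 2) *
    Real.exp (-(1 / 2) *
      dotProduct ((WithLp.equiv 2 (Fin d → ℝ)) (z - m))
        (S⁻¹.mulVec ((WithLp.equiv 2 (Fin d → ℝ)) (z - m))))

section TweedieAux

variable {d : ℕ}
local notation "E" => EuclideanSpace ℝ (Fin d)

/-- The continuous linear map on Euclidean space given by a matrix. -/
noncomputable def tweedieTm (A : Matrix (Fin d) (Fin d) ℝ) : E →L[ℝ] E :=
  LinearMap.toContinuousLinearMap (Matrix.toEuclideanLin A)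

theorem tweedieTm_inner (A : Matrix (Fin d) (Fin d) ℝ) (x y : E) :
    ⟪x, tweedieTm A y⟫ =
      dotProduct (WithLp.equiv 2 (Fin d → ℝ) x)
        (A.mulVec (WithLp.equiv 2 (Fin d → ℝ) y)) := by
  rw [EuclideanSpace.inner_eq_star_dotProduct]
  simp [tweedieTm, Matrix.toEuclideanLin_apply]
  exact dotProduct_comm _ _

theorem tweedieTm_equiv_apply (A : Matrix (Fin d) (Fin d) ℝ) (x : E) :
    WithLp.equiv 2 (Fin d → ℝ) (tweedieTm A x) =
      A.mulVec (WithLp.equiv 2 (Fin d → ℝ) x) := by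
  simp [tweedieTm, Matrix.toEuclideanLin_apply]

theorem tweedieTm_symm (S : Matrix (Fin d) (Fin d) ℝ) (hS : S.PosDef) (x y : E) :
    ⟪tweedieTm S⁻¹ x, y⟫ = ⟪x, tweedieTm S⁻¹ y⟫ := by
  have hsym : Matrix.transpose (S⁻¹) = S⁻¹ := by
    rw [Matrix.transpose_nonsing_inv]; congr 1
    have h := hS.1; rwa [Matrix.IsHermitian, Matrix.conjTranspose_eq_transpose_of_trivial] at h
  rw [real_inner_comm, tweedieTm_inner, tweedieTm_inner, Matrix.dotProduct_mulVec,
    ← Matrix.mulVec_transpose, hsym, dotProduct_comm]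

theorem tweedieTm_pos (A : Matrix (Fin d) (Fin d) ℝ) (hA : A.PosDef) (v : E) (hv : v ≠ 0) :
    0 < ⟪v, tweedieTm A v⟫ := by
  rw [tweedieTm_inner]
  have : (WithLp.equiv 2 (Fin d → ℝ)) v ≠ 0 := by
    intro h; apply hv; simpa using h
  simpa using hA.re_dotProduct_pos this

theorem tweedieTm_nonneg (A : Matrix (Fin d) (Fin d) ℝ) (hA : A.PosDef) (v : E) :
    0 ≤ ⟪v, tweedieTm A v⟫ := by
  rcases eq_or_ne v 0 with rfl | hv
  · simp
  · exact (tweedieTm_pos A hA v hv).le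

theorem tweedieTm_coercive (A : Matrix (Fin d) (Fin d) ℝ) (hA : A.PosDef) :
    ∃ c > 0, ∀ v : E, c * ‖v‖ ^ 2 ≤ ⟪v, tweedieTm A v⟫ := by
  by_cases hne : (Metric.sphere (0 : E) 1).Nonempty
  · have hcont : Continuous fun v : E => ⟪v, tweedieTm A v⟫ :=
      continuous_id.inner (tweedieTm A).continuous
    obtain ⟨u₀, hu₀mem, hmin'⟩ :=
      (isCompact_sphere (0 : E) 1).exists_isMinOn hne hcont.continuousOn
    have hmin : ∀ x ∈ Metric.sphere (0 : E) 1, ⟪u₀, tweedieTm A u₀⟫ ≤ ⟪x, tweedieTm A x⟫ :=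
      fun x hx => hmin' hx
    have hu₀ : u₀ ≠ 0 := by
      intro h
      rw [Metric.mem_sphere, h] at hu₀mem; simp at hu₀mem
    refine ⟨⟪u₀, tweedieTm A u₀⟫, tweedieTm_pos A hA u₀ hu₀, fun v => ?_⟩
    rcases eq_or_ne v 0 with rfl | hv
    · simp
    · have hn : ‖v‖ ≠ 0 := norm_ne_zero_iff.2 hv
      have hmem : ‖v‖⁻¹ • v ∈ Metric.sphere (0 : E) 1 := by
        simp [norm_smul, abs_of_nonneg (norm_nonneg v), inv_mul_cancel₀ hn]
      have hle := hmin _ hmem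
      have hexp : ⟪‖v‖⁻¹ • v, tweedieTm A (‖v‖⁻¹ • v)⟫ = (‖v‖⁻¹) ^ 2 * ⟪v, tweedieTm A v⟫ := by
        rw [(tweedieTm A).map_smul, real_inner_smul_left, real_inner_smul_right]; ring
      rw [hexp] at hle
      have h2 : ‖v‖ ^ 2 * ⟪u₀, tweedieTm A u₀⟫ ≤
          ‖v‖ ^ 2 * ((‖v‖⁻¹) ^ 2 * ⟪v, tweedieTm A v⟫) :=
        mul_le_mul_of_nonneg_left hle (by positivity)
      calc ⟪u₀, tweedieTm A u₀⟫ * ‖v‖ ^ 2 = ‖v‖ ^ 2 * ⟪u₀, tweedieTm A u₀⟫ := by ring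
        _ ≤ ‖v‖ ^ 2 * ((‖v‖⁻¹) ^ 2 * ⟪v, tweedieTm A v⟫) := h2
        _ = ⟪v, tweedieTm A v⟫ := by field_simp
  · refine ⟨1, one_pos, fun v => ?_⟩
    rcases eq_or_ne v 0 with rfl | hv
    · simp
    · exact absurd ⟨‖v‖⁻¹ • v, by
        simp [norm_smul, abs_of_nonneg (norm_nonneg v),
          inv_mul_cancel₀ (norm_ne_zero_iff.2 hv)]⟩ hne

theorem tweedie_t_exp_bound {c : ℝ} (hc : 0 < c) (t : ℝ) (ht : 0 ≤ t) :
    t * Real.exp (-(c * t ^ 2)) ≤ max 1 c⁻¹ := by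
  rcases le_or_gt t 1 with h | h
  · calc t * Real.exp (-(c * t ^ 2)) ≤ t * 1 := by
          apply mul_le_mul_of_nonneg_left _ ht
          exact Real.exp_le_one_iff.2 (neg_nonpos.2 (by positivity))
      _ ≤ 1 := by simpa using h
      _ ≤ max 1 c⁻¹ := le_max_left _ _
  · have h1 : c * t ^ 2 ≤ Real.exp (c * t ^ 2) := (Real.add_one_le_exp _).trans' (by nlinarith)
    have h2 : Real.exp (-(c * t ^ 2)) ≤ (c * t ^ 2)⁻¹ := by
      rw [Real.exp_neg]
      exact inv_anti₀ (by positivity) h1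
    calc t * Real.exp (-(c * t ^ 2)) ≤ t * (c * t ^ 2)⁻¹ :=
          mul_le_mul_of_nonneg_left h2 ht
      _ = c⁻¹ * t⁻¹ := by field_simp
      _ ≤ c⁻¹ * 1 := mul_le_mul_of_nonneg_left (inv_le_one_of_one_le₀ h.le) (inv_pos.2 hc).le
      _ ≤ max 1 c⁻¹ := by simp

/-- The Gaussian density rewritten through the inner product. -/
theorem gaussDensity_eq (S : Matrix (Fin d) (Fin d) ℝ) (m w : E) :
    gaussDensity d S m w =
      ((2 * Real.pi) ^ d * S.det) ^ (-(1 : ℝ) / 2) *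
        Real.exp (-(1 / 2) * ⟪w - m, tweedieTm S⁻¹ (w - m)⟫) := by
  rw [gaussDensity, tweedieTm_inner]

theorem gaussDensity_hasFDerivAt (S : Matrix (Fin d) (Fin d) ℝ) (hS : S.PosDef) (m w : E) :
    HasFDerivAt (fun w : E => gaussDensity d S m w)
      ((gaussDensity d S m w) • (innerSL ℝ (tweedieTm S⁻¹ (m - w)))) w := by
  have hfun : (fun w : E => gaussDensity d S m w) = fun w : E =>
      ((2 * Real.pi) ^ d * S.det) ^ (-(1 : ℝ) / 2) *
        Real.exp (-(1 / 2) * ⟪w - m, tweedieTm S⁻¹ (w - m)⟫) :=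
    funext fun w => gaussDensity_eq S m w
  rw [hfun, gaussDensity_eq]
  set c := ((2 * Real.pi) ^ d * S.det) ^ (-(1 : ℝ) / 2)
  have hu : HasFDerivAt (fun w : E => w - m) (ContinuousLinearMap.id ℝ E) w :=
    (hasFDerivAt_id w).sub_const m
  have hTu : HasFDerivAt (fun w : E => tweedieTm S⁻¹ (w - m)) (tweedieTm S⁻¹) w :=
    (tweedieTm S⁻¹).hasFDerivAt.comp w hu
  have hq := (hu.inner ℝ hTu).const_mul (-(1/2) : ℝ)
  have hq' := ((hq.exp).const_mul c)
  refine hq'.congr_fderiv ?_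
  ext h
  simp only [ContinuousLinearMap.smul_apply, ContinuousLinearMap.coe_comp',
    Function.comp_apply, fderivInnerCLM_apply, ContinuousLinearMap.coe_id', id_eq,
    ContinuousLinearMap.coe_smul', Pi.smul_apply, innerSL_apply_apply, smul_eq_mul,
    ContinuousLinearMap.prod_apply]
  have h1 : ⟪w - m, tweedieTm S⁻¹ h⟫ = ⟪tweedieTm S⁻¹ (w - m), h⟫ :=
    (tweedieTm_symm S hS _ _).symm
  have h2 : (tweedieTm S⁻¹) (m - w) = -(tweedieTm S⁻¹ (w - m)) := by
    rw [← map_neg]; congr 1; abel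
  rw [h2, inner_neg_left, h1, real_inner_comm (tweedieTm S⁻¹ (w - m)) h]
  ring

theorem gaussDensity_continuous (S : Matrix (Fin d) (Fin d) ℝ) (w : E) :
    Continuous fun m : E => gaussDensity d S m w := by
  have hfun : (fun m : E => gaussDensity d S m w) = fun m : E =>
      ((2 * Real.pi) ^ d * S.det) ^ (-(1 : ℝ) / 2) *
        Real.exp (-(1 / 2) * ⟪w - m, tweedieTm S⁻¹ (w - m)⟫) :=
    funext fun m => gaussDensity_eq S m w
  rw [hfun]
  exact continuous_const.mul (Real.continuous_exp.comp (continuous_const.mul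
    ((continuous_const.sub continuous_id).inner
      ((tweedieTm S⁻¹).continuous.comp (continuous_const.sub continuous_id)))))

end TweedieAux

/-- Tweedie's formula: if `z | μ ~ N(μ, Σ)` with `Σ` fixed positive definite and `μ` has
prior density `g`, then the posterior mean satisfies
`E[μ | z] = z + Σ ∇_z log p(z)`, where `p(z) = ∫ N(z; μ, Σ) g(μ) dμ` is the marginal. -/
theorem tweedie_formula (d : ℕ) (S : Matrix (Fin d) (Fin d) ℝ) (hS : S.PosDef)
    (g : EuclideanSpace ℝ (Fin d) → ℝ) (hg : ∀ m, 0 ≤ g m)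
    (hgint : ∫ m, g m = 1)
    (p : EuclideanSpace ℝ (Fin d) → ℝ)
    (hp : ∀ z, p z = ∫ m, gaussDensity d S m z * g m)
    (hppos : ∀ z, 0 < p z) (hpsmooth : ContDiff ℝ (⊤ : ℕ∞) p)
    (z : EuclideanSpace ℝ (Fin d))
    (hint : Integrable (fun m : EuclideanSpace ℝ (Fin d) =>
      (gaussDensity d S m z * g m) • m)) :
    (p z)⁻¹ • (∫ m : EuclideanSpace ℝ (Fin d), (gaussDensity d S m z * g m) • m) =
      z + (WithLp.equiv 2 (Fin d → ℝ)).symm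
        (S.mulVec ((WithLp.equiv 2 (Fin d → ℝ))
          (gradient (fun w => Real.log (p w)) z))) := by
  classical
  set c₀ : ℝ := ((2 * Real.pi) ^ d * S.det) ^ (-(1 : ℝ) / 2) with hc₀def
  have hdetpos : (0:ℝ) < (2 * Real.pi) ^ d * S.det :=
    mul_pos (pow_pos (by positivity) d) hS.det_pos
  have hc₀ : 0 < c₀ := Real.rpow_pos_of_pos hdetpos _
  have hAinv : (S⁻¹).PosDef := hS.inv
  -- basic positivity/bounds for the gaussian density
  have hgauss_pos : ∀ m w : EuclideanSpace ℝ (Fin d), 0 < gaussDensity d S m w := by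
    intro m w; rw [gaussDensity_eq]
    exact mul_pos (Real.rpow_pos_of_pos hdetpos _) (Real.exp_pos _)
  have hgauss_le : ∀ m w : EuclideanSpace ℝ (Fin d), gaussDensity d S m w ≤ c₀ := by
    intro m w
    rw [gaussDensity_eq]
    have h1 : Real.exp (-(1 / 2) * ⟪w - m, tweedieTm S⁻¹ (w - m)⟫) ≤ 1 := by
      apply Real.exp_le_one_iff.2
      have := tweedieTm_nonneg (S⁻¹) hAinv (w - m)
      nlinarith
    calc c₀ * Real.exp (-(1 / 2) * ⟪w - m, tweedieTm S⁻¹ (w - m)⟫) ≤ c₀ * 1 :=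
          mul_le_mul_of_nonneg_left h1 hc₀.le
      _ = c₀ := mul_one c₀
  -- g is integrable
  have hginteg : Integrable g := by
    by_contra h
    rw [integral_undef h] at hgint
    norm_num at hgint
  -- measurability
  have hFmeas : ∀ w : EuclideanSpace ℝ (Fin d),
      AEStronglyMeasurable (fun m => gaussDensity d S m w * g m) volume :=
    fun w => ((gaussDensity_continuous S w).aestronglyMeasurable).mul hginteg.1
  have hFint : ∀ w : EuclideanSpace ℝ (Fin d),
      Integrable (fun m => gaussDensity d S m w * g m) := by
    intro w
    apply Integrable.mono' (hginteg.const_mul c₀) (hFmeas w)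
    filter_upwards with m
    rw [Real.norm_eq_abs, abs_of_nonneg (mul_nonneg (hgauss_pos m w).le (hg m))]
    exact mul_le_mul_of_nonneg_right (hgauss_le m w) (hg m)
  -- coercivity bound
  obtain ⟨c, hc, hcoer⟩ := tweedieTm_coercive (S⁻¹) hAinv
  set K : ℝ := max 1 (c / 2)⁻¹ with hKdef
  set B : ℝ := c₀ * ‖tweedieTm (d := d) S⁻¹‖ * K with hBdef
  -- bound on the derivatives
  have hbound : ∀ m w : EuclideanSpace ℝ (Fin d),
      ‖(gaussDensity d S m w * g m) • (innerSL ℝ (tweedieTm S⁻¹ (m - w)))‖ ≤ B * g m := by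
    intro m w
    rw [norm_smul (gaussDensity d S m w * g m)
        (innerSL ℝ ((tweedieTm S⁻¹) (m - w))), innerSL_apply_norm, Real.norm_eq_abs,
      abs_of_nonneg (mul_nonneg (hgauss_pos m w).le (hg m))]
    have hTnorm : ‖tweedieTm S⁻¹ (m - w)‖ ≤ ‖tweedieTm (d := d) S⁻¹‖ * ‖w - m‖ := by
      have := (tweedieTm (d := d) S⁻¹).le_opNorm (m - w)
      rwa [show ‖m - w‖ = ‖w - m‖ from norm_sub_rev m w] at this
    have hgauss2 : gaussDensity d S m w ≤ c₀ * Real.exp (-(c / 2 * ‖w - m‖ ^ 2)) := by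
      rw [gaussDensity_eq]
      apply mul_le_mul_of_nonneg_left _ hc₀.le
      apply Real.exp_le_exp.2
      have := hcoer (w - m)
      nlinarith
    have hKb : ‖w - m‖ * Real.exp (-(c / 2 * ‖w - m‖ ^ 2)) ≤ K :=
      tweedie_t_exp_bound (by positivity) _ (norm_nonneg _)
    have key : gaussDensity d S m w * ‖tweedieTm S⁻¹ (m - w)‖ ≤ B := by
      calc gaussDensity d S m w * ‖tweedieTm S⁻¹ (m - w)‖
          ≤ (c₀ * Real.exp (-(c / 2 * ‖w - m‖ ^ 2))) * (‖tweedieTm (d := d) S⁻¹‖ * ‖w - m‖) := by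
            apply mul_le_mul hgauss2 hTnorm (norm_nonneg _)
              (mul_nonneg hc₀.le (Real.exp_pos _).le)
        _ = c₀ * ‖tweedieTm (d := d) S⁻¹‖ * (‖w - m‖ * Real.exp (-(c / 2 * ‖w - m‖ ^ 2))) := by
            ring
        _ ≤ c₀ * ‖tweedieTm (d := d) S⁻¹‖ * K := by
            apply mul_le_mul_of_nonneg_left hKb (mul_nonneg hc₀.le (norm_nonneg _))
        _ = B := rfl
    calc gaussDensity d S m w * g m * ‖tweedieTm S⁻¹ (m - w)‖
        = (gaussDensity d S m w * ‖tweedieTm S⁻¹ (m - w)‖) * g m := by ring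
      _ ≤ B * g m := mul_le_mul_of_nonneg_right key (hg m)
  -- measurability of the derivative
  have hF'meas : AEStronglyMeasurable
      (fun m => (gaussDensity d S m z * g m) • (innerSL ℝ (tweedieTm S⁻¹ (m - z)))) volume := by
    apply AEStronglyMeasurable.smul (hFmeas z)
    apply Continuous.aestronglyMeasurable
    exact (innerSL ℝ).continuous.comp ((tweedieTm S⁻¹).continuous.comp
      (continuous_id.sub continuous_const))
  -- differentiation under the integral sign
  have key := hasFDerivAt_integral_of_dominated_of_fderiv_le
    (F := fun (w m : EuclideanSpace ℝ (Fin d)) => gaussDensity d S m w * g m)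
    (F' := fun (w m : EuclideanSpace ℝ (Fin d)) =>
      (gaussDensity d S m w * g m) • (innerSL ℝ (tweedieTm S⁻¹ (m - w))))
    (bound := fun m => B * g m) (μ := volume) (x₀ := z) (s := Metric.ball z 1) (Metric.ball_mem_nhds z one_pos)
    (Filter.Eventually.of_forall fun w => hFmeas w) (hFint z) hF'meas
    (Filter.Eventually.of_forall fun m w _ => hbound m w)
    (hginteg.const_mul B)
    (Filter.Eventually.of_forall fun m w _ => by
      have h1 := (gaussDensity_hasFDerivAt S hS m w).mul_const (g m)
      refine h1.congr_fderiv ?_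
      rw [smul_smul, mul_comm])
  -- identify p with the parametric integral
  have hpfun : (fun w => ∫ m, gaussDensity d S m w * g m) = p := (funext hp).symm
  rw [hpfun] at key
  -- integrability of the derivative integrand and of the shifted integrand
  have hF'int : Integrable
      (fun m => (gaussDensity d S m z * g m) • (innerSL ℝ (tweedieTm S⁻¹ (m - z)))) := by
    apply Integrable.mono' (hginteg.const_mul B) hF'meas
    filter_upwards with m using hbound m z
  have hvint : Integrable (fun m => (gaussDensity d S m z * g m) • (m - z)) := by
    have : (fun m => (gaussDensity d S m z * g m) • (m - z)) =
        fun m => (gaussDensity d S m z * g m) • m - (gaussDensity d S m z * g m) • z := by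
      funext m; rw [smul_sub]
    rw [this]
    exact hint.sub ((hFint z).smul_const z)
  -- the value of the derivative as a gradient
  set V : EuclideanSpace ℝ (Fin d) := ∫ m, (gaussDensity d S m z * g m) • (m - z) with hVdef
  have hDeq : (∫ m, (gaussDensity d S m z * g m) • (innerSL ℝ (tweedieTm S⁻¹ (m - z)))) =
      (InnerProductSpace.toDual ℝ (EuclideanSpace ℝ (Fin d))) (tweedieTm S⁻¹ V) := by
    apply ContinuousLinearMap.ext
    intro h
    rw [ContinuousLinearMap.integral_apply hF'int h, InnerProductSpace.toDual_apply_apply]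
    have step : ∀ m : EuclideanSpace ℝ (Fin d),
        ((gaussDensity d S m z * g m) • (innerSL ℝ (tweedieTm S⁻¹ (m - z)))) h =
          ((innerSL ℝ h).comp (tweedieTm S⁻¹)) ((gaussDensity d S m z * g m) • (m - z)) := by
      intro m
      simp only [ContinuousLinearMap.smul_apply, innerSL_apply_apply, smul_eq_mul,
        ContinuousLinearMap.coe_comp', Function.comp_apply, _root_.map_smul, inner_smul_right]
      rw [real_inner_comm]
    simp_rw [step]
    rw [ContinuousLinearMap.integral_comp_comm _ hvint]
    simp only [ContinuousLinearMap.coe_comp', Function.comp_apply, innerSL_apply_apply]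
    rw [real_inner_comm]
  rw [hDeq] at key
  -- gradient of log p
  have hlogD : HasFDerivAt (fun w => Real.log (p w))
      ((p z)⁻¹ • (InnerProductSpace.toDual ℝ (EuclideanSpace ℝ (Fin d))) (tweedieTm S⁻¹ V)) z :=
    (Real.hasDerivAt_log (hppos z).ne').comp_hasFDerivAt z key
  have hsmuldual : (p z)⁻¹ • (InnerProductSpace.toDual ℝ (EuclideanSpace ℝ (Fin d)))
      (tweedieTm S⁻¹ V) = (InnerProductSpace.toDual ℝ (EuclideanSpace ℝ (Fin d)))
      ((p z)⁻¹ • tweedieTm S⁻¹ V) := by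
    apply ContinuousLinearMap.ext
    intro y
    simp only [ContinuousLinearMap.smul_apply, InnerProductSpace.toDual_apply_apply,
      real_inner_smul_left, smul_eq_mul]
  rw [hsmuldual] at hlogD
  have hgradlog := hlogD.hasGradientAt
  rw [LinearIsometryEquiv.symm_apply_apply] at hgradlog
  rw [hgradlog.gradient]
  -- compute V
  have hVval : V = (∫ m, (gaussDensity d S m z * g m) • m) - p z • z := by
    rw [hVdef]
    have : (fun m => (gaussDensity d S m z * g m) • (m - z)) =
        fun m => (gaussDensity d S m z * g m) • m - (gaussDensity d S m z * g m) • z := by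
      funext m; rw [smul_sub]
    rw [this, integral_sub hint ((hFint z).smul_const z), integral_smul_const, ← hp z]
  -- final linear algebra
  have hSdet : IsUnit S.det := isUnit_iff_ne_zero.2 hS.det_pos.ne'
  have hmulinv : S * S⁻¹ = 1 := Matrix.mul_nonsing_inv S hSdet
  rw [show ∀ (a : ℝ) (x : EuclideanSpace ℝ (Fin d)), WithLp.equiv 2 (Fin d → ℝ) (a • x) =
      a • WithLp.equiv 2 (Fin d → ℝ) x from fun _ _ => rfl, tweedieTm_equiv_apply, Matrix.mulVec_smul, Matrix.mulVec_mulVec,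
    hmulinv, Matrix.one_mulVec, show ∀ (a : ℝ) (x : Fin d → ℝ), (WithLp.equiv 2 (Fin d → ℝ)).symm (a • x) =
      a • (WithLp.equiv 2 (Fin d → ℝ)).symm x from fun _ _ => rfl, Equiv.symm_apply_apply, hVval,
    smul_sub, smul_smul, inv_mul_cancel₀ (hppos z).ne', one_smul]
  abel
end

section
/- 1 − T, where T is the Tanimoto similarity T(A,B) = |A ∩ B|/|A ∪ B|, is a metric on finite nonempty subsets of a fixed universe (the Jaccard distance satisfies the triangle inequality). -/
/-!
Writing `d(A, B) = |A ∆ B| / |A ∪ B|`, the triangle inequality comes from the exact count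
`|A ∆ B| + |B ∆ C| = |A ∆ C| + 2 |(A ∆ B) ∩ (B ∆ C)|`: the elements of `B` outside `A ∪ C` are
counted twice on the right, so `|A ∆ C| / |A ∪ C| ≤ (|A ∆ B| + |B ∆ C|) / |A ∪ B ∪ C|`, and
enlarging the denominators `|A ∪ B|`, `|B ∪ C|` to `|A ∪ B ∪ C|` only decreases the right side.
-/

open Finset
open scoped symmDiff

namespace Finset

variable {α : Type*} [DecidableEq α]

theorem card_symmDiff_add_card_inter (s t : Finset α) : #(s ∆ t) + #(s ∩ t) = #(s ∪ t) := by
  rw [symmDiff_eq_sup_sdiff_inf]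
  exact card_sdiff_add_card_eq_card inter_subset_union

theorem card_symmDiff_add_two_mul_card_inter (s t : Finset α) :
    #(s ∆ t) + 2 * #(s ∩ t) = #s + #t := by
  linarith [card_symmDiff_add_card_inter s t, card_union_add_card_inter s t]

theorem card_symmDiff_add_card_symmDiff (A B C : Finset α) :
    #(A ∆ B) + #(B ∆ C) = #(A ∆ C) + 2 * #((A ∆ B) ∩ (B ∆ C)) := by
  rw [← card_symmDiff_add_two_mul_card_inter, symmDiff_assoc,
    symmDiff_symmDiff_cancel_left]

theorem card_symmDiff_mul_card_union_le (A B C : Finset α) :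
    #(A ∆ C) * #(A ∪ B ∪ C) ≤ (#(A ∆ B) + #(B ∆ C)) * #(A ∪ C) := by
  have hcover : A ∪ B ∪ C ⊆ (A ∪ C) ∪ ((A ∆ B) ∩ (B ∆ C)) := by
    intro x; simp only [mem_union, mem_inter, mem_symmDiff]; tauto
  have hn := (card_le_card hcover).trans (card_union_le _ _)
  have hAC : #(A ∆ C) ≤ #(A ∪ C) := card_le_card symmDiff_subset_union
  rw [card_symmDiff_add_card_symmDiff]
  nlinarith

end Finset

section Jaccard

variable {α : Type*} [DecidableEq α]

/-- With `0 / 0 = 0` this gives `jaccardDist ∅ ∅ = 1`. -/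
noncomputable def jaccardDist (A B : Finset α) : ℝ :=
  1 - (#(A ∩ B) : ℝ) / #(A ∪ B)

theorem jaccardDist_comm (A B : Finset α) : jaccardDist A B = jaccardDist B A := by
  rw [jaccardDist, jaccardDist, inter_comm, union_comm]

theorem jaccardDist_nonneg (A B : Finset α) : 0 ≤ jaccardDist A B :=
  sub_nonneg.mpr <| div_le_one_of_le₀ (mod_cast card_le_card inter_subset_union) (by positivity)

theorem jaccardDist_le_one (A B : Finset α) : jaccardDist A B ≤ 1 :=
  sub_le_self _ (by positivity)

@[simp]
theorem jaccardDist_empty_right (A : Finset α) : jaccardDist A ∅ = 1 := by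
  simp [jaccardDist]

theorem jaccardDist_eq_card_symmDiff_div {A B : Finset α} (h : (A ∪ B).Nonempty) :
    jaccardDist A B = #(A ∆ B) / #(A ∪ B) := by
  have hpos : (0 : ℝ) < #(A ∪ B) := mod_cast h.card_pos
  have hcard : (#(A ∆ B) : ℝ) + #(A ∩ B) = #(A ∪ B) := mod_cast card_symmDiff_add_card_inter A B
  rw [jaccardDist, eq_div_iff hpos.ne', sub_mul, div_mul_cancel₀ _ hpos.ne']
  linarith

theorem jaccardDist_eq_zero_iff {A B : Finset α} (h : (A ∪ B).Nonempty) :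
    jaccardDist A B = 0 ↔ A = B := by
  rw [jaccardDist_eq_card_symmDiff_div h, div_eq_zero_iff]
  simp [h.card_pos.ne']

theorem jaccardDist_triangle (A B C : Finset α) :
    jaccardDist A C ≤ jaccardDist A B + jaccardDist B C := by
  -- If `A` or `B` is empty then `jaccardDist A B = 1`, which already bounds `jaccardDist A C`.
  rcases B.eq_empty_or_nonempty with rfl | hB
  · linarith [jaccardDist_le_one A C, jaccardDist_nonneg ∅ C, jaccardDist_empty_right A]
  rcases A.eq_empty_or_nonempty with rfl | hA
  · linarith [jaccardDist_le_one ∅ C, jaccardDist_nonneg B C, jaccardDist_empty_right B,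
      jaccardDist_comm ∅ B]
  have hAB_le : (#(A ∪ B) : ℝ) ≤ #(A ∪ B ∪ C) := mod_cast card_le_card subset_union_left
  have hBC_le : (#(B ∪ C) : ℝ) ≤ #(A ∪ B ∪ C) :=
    mod_cast card_le_card (union_subset_union_left subset_union_right)
  have hAB : (0 : ℝ) < #(A ∪ B) := mod_cast (hA.mono subset_union_left).card_pos
  have hBC : (0 : ℝ) < #(B ∪ C) := mod_cast (hB.mono subset_union_left).card_pos
  have hAC : (0 : ℝ) < #(A ∪ C) := mod_cast (hA.mono subset_union_left).card_pos
  have hABC : (0 : ℝ) < #(A ∪ B ∪ C) := hAB.trans_le hAB_le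
  rw [jaccardDist_eq_card_symmDiff_div (hA.mono subset_union_left),
    jaccardDist_eq_card_symmDiff_div (hA.mono subset_union_left),
    jaccardDist_eq_card_symmDiff_div (hB.mono subset_union_left)]
  calc (#(A ∆ C) : ℝ) / #(A ∪ C)
      ≤ (#(A ∆ B) + #(B ∆ C)) / #(A ∪ B ∪ C) := by
        rw [div_le_div_iff₀ hAC hABC]
        exact_mod_cast card_symmDiff_mul_card_union_le A B C
    _ = #(A ∆ B) / #(A ∪ B ∪ C) + #(B ∆ C) / #(A ∪ B ∪ C) := add_div _ _ _
    _ ≤ #(A ∆ B) / #(A ∪ B) + #(B ∆ C) / #(B ∪ C) := by gcongr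

end Jaccard

theorem jaccard_distance_metric_general {α : Type*} [DecidableEq α]
    (A B C : Finset α) (hA : A.Nonempty) :
    (0 ≤ 1 - ((A ∩ B).card : ℝ) / ((A ∪ B).card : ℝ)) ∧
    ((1 - ((A ∩ B).card : ℝ) / ((A ∪ B).card : ℝ) = 0) ↔ A = B) ∧
    (1 - ((A ∩ B).card : ℝ) / ((A ∪ B).card : ℝ) =
      1 - ((B ∩ A).card : ℝ) / ((B ∪ A).card : ℝ)) ∧
    (1 - ((A ∩ C).card : ℝ) / ((A ∪ C).card : ℝ) ≤
      (1 - ((A ∩ B).card : ℝ) / ((A ∪ B).card : ℝ)) +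
        (1 - ((B ∩ C).card : ℝ) / ((B ∪ C).card : ℝ))) :=
  ⟨jaccardDist_nonneg A B, jaccardDist_eq_zero_iff (hA.mono subset_union_left),
    jaccardDist_comm A B, jaccardDist_triangle A B C⟩

/-- The Jaccard distance `d(A,B) = 1 − |A ∩ B|/|A ∪ B|` is a metric on finite nonempty
subsets: it is nonnegative, vanishes exactly on equal sets, is symmetric, and satisfies
the triangle inequality. -/
theorem jaccard_distance_metric {α : Type*} [DecidableEq α]
    (A B C : Finset α) (hA : A.Nonempty) (hB : B.Nonempty) (hC : C.Nonempty) :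
    (0 ≤ 1 - ((A ∩ B).card : ℝ) / ((A ∪ B).card : ℝ)) ∧
    ((1 - ((A ∩ B).card : ℝ) / ((A ∪ B).card : ℝ) = 0) ↔ A = B) ∧
    (1 - ((A ∩ B).card : ℝ) / ((A ∪ B).card : ℝ) =
      1 - ((B ∩ A).card : ℝ) / ((B ∪ A).card : ℝ)) ∧
    (1 - ((A ∩ C).card : ℝ) / ((A ∪ C).card : ℝ) ≤
      (1 - ((A ∩ B).card : ℝ) / ((A ∪ B).card : ℝ)) +
        (1 - ((B ∩ C).card : ℝ) / ((B ∪ C).card : ℝ))) :=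
  jaccard_distance_metric_general A B C hA
end
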